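/- arXiv:1501.06783 — 3 statements merged into one kernel-verified Lean document; each statement's English description precedes it below -/
import Mathlib

section
/- Let D be a probability distribution on [n] and P a monotone non-increasing probability distribution on [n] with d_TV(D,P) ≤ ε. If the flattening of P with respect to a fixed interval partition satisfies d_TV(P, P̄) ≤ α, then d_TV(D, D̄) ≤ 2ε + α, where D̄ is the flattening of D with respect to the same partition. -/
open Finset

/-
Flattening is an averaging operator, hence linear and a contraction for the ℓ¹ norm, so
d_TV(P̄, D̄) ≤ d_TV(P, D). The triangle inequality through P and P̄ then gives
d_TV(D, D̄) ≤ d_TV(D, P) + d_TV(P, P̄) + d_TV(P̄, D̄) ≤ 2ε + α.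
-/

noncomputable def tv {n : ℕ} (D P : Fin n → ℝ) : ℝ := (∑ i, |D i - P i|) / 2

def IsDist {n : ℕ} (D : Fin n → ℝ) : Prop := (∀ i, 0 ≤ D i) ∧ ∑ i, D i = 1

noncomputable def flatten {n ℓ : ℕ} (c : Fin n → Fin ℓ) (D : Fin n → ℝ) : Fin n → ℝ :=
  fun i => (∑ j ∈ univ.filter (fun j => c j = c i), D j) /
    ((univ.filter (fun j => c j = c i)).card : ℝ)

lemma tv_comm {n : ℕ} (D P : Fin n → ℝ) : tv D P = tv P D := by
  simp only [tv, abs_sub_comm]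

lemma tv_triangle {n : ℕ} (D P Q : Fin n → ℝ) : tv D Q ≤ tv D P + tv P Q := by
  unfold tv
  rw [← add_div, ← sum_add_distrib]
  gcongr with i
  exact abs_sub_le _ _ _

section Flatten

variable {n ℓ : ℕ} (c : Fin n → Fin ℓ)

lemma flatten_sub (f g : Fin n → ℝ) : flatten c (f - g) = flatten c f - flatten c g := by
  ext i
  simp only [flatten, Pi.sub_apply, sum_sub_distrib, sub_div]

lemma flatten_of_mem_fiber (f : Fin n → ℝ) {i : Fin n} {k : Fin ℓ} (hi : c i = k) :
    flatten c f i = (∑ j ∈ univ.filter (fun j => c j = k), f j) /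
      ((univ.filter (fun j => c j = k)).card : ℝ) := by
  simp only [flatten, hi]

lemma sum_fiber_abs_flatten (f : Fin n → ℝ) (k : Fin ℓ) :
    ∑ i ∈ univ.filter (fun i => c i = k), |flatten c f i| =
      |∑ j ∈ univ.filter (fun j => c j = k), f j| := by
  rcases (univ.filter (fun j => c j = k)).eq_empty_or_nonempty with hs | hs
  · simp only [hs, sum_empty, abs_zero]
  rw [sum_congr rfl fun i hi => by rw [flatten_of_mem_fiber c f (mem_filter.mp hi).2],
    sum_const, nsmul_eq_mul, abs_div, Nat.abs_cast]
  have : (#(univ.filter (fun j => c j = k)) : ℝ) ≠ 0 := by exact_mod_cast hs.card_pos.ne'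
  field_simp

lemma sum_abs_flatten_le (f : Fin n → ℝ) : ∑ i, |flatten c f i| ≤ ∑ i, |f i| := by
  rw [← sum_fiberwise univ c, ← sum_fiberwise univ c (fun i => |f i|)]
  refine sum_le_sum fun k _ => ?_
  rw [sum_fiber_abs_flatten]
  exact abs_sum_le_sum_abs _ _

lemma tv_flatten_le (D P : Fin n → ℝ) : tv (flatten c D) (flatten c P) ≤ tv D P := by
  unfold tv
  refine div_le_div_of_nonneg_right ?_ zero_le_two
  simpa only [flatten_sub, Pi.sub_apply] using sum_abs_flatten_le c (D - P)

end Flatten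

theorem flatten_robust_general {n ℓ : ℕ} (c : Fin n → Fin ℓ) (D P : Fin n → ℝ) (ε α : ℝ)
    (hclose : tv D P ≤ ε)
    (hPflat : tv P (flatten c P) ≤ α) :
    tv D (flatten c D) ≤ 2 * ε + α := by
  have hflat : tv (flatten c P) (flatten c D) ≤ ε := by
    rw [tv_comm]
    exact (tv_flatten_le c D P).trans hclose
  calc tv D (flatten c D)
      ≤ tv D P + tv P (flatten c D) := tv_triangle _ _ _
    _ ≤ tv D P + (tv P (flatten c P) + tv (flatten c P) (flatten c D)) := by
        gcongr
        exact tv_triangle _ _ _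
    _ ≤ ε + (α + ε) := by gcongr
    _ = 2 * ε + α := by ring

theorem flatten_robust {n ℓ : ℕ} (c : Fin n → Fin ℓ) (hmono : Monotone c)
    (hsurj : Function.Surjective c) (D P : Fin n → ℝ) (ε α : ℝ)
    (hD : IsDist D) (hP : IsDist P)
    (hPanti : Antitone P)
    (hclose : tv D P ≤ ε)
    (hPflat : tv P (flatten c P) ≤ α) :
    tv D (flatten c D) ≤ 2 * ε + α :=
  flatten_robust_general c D P ε α hclose hPflat
end

section
/- Fix α ∈ (0,1) and a probability distribution Q on [ℓ]. Let W = {i ∈ {2,...,ℓ} : Q(i) > (1+α)Q(i-1)} be the set of witnesses violating the exponential-growth property. Then there exists a distribution Q' on [ℓ] satisfying Q'(i+1) ≤ (1+α)Q'(i) for all i < ℓ, such that d_TV(Q, Q') ≤ ((1+α)/α) · Q(W). -/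
/-!
Replace `Q` by its upper envelope `B`, the smallest function above `Q` whose growth ratio is at
most `1 + α`: going backwards from the last index, `B i = max (Q i) (B (i + 1) / (1 + α))`. Its
normalisation `B / ∑ B` has the exponential property and lies within `∑ B - 1 = ∑ (B - Q)` of `Q`
in total variation. The excess `E = B - Q` vanishes at the last index and satisfies
`(1 + α) E i ≤ E (i + 1) + (Q (i + 1) - (1 + α) Q i)⁺`; summing over `i` gives
`α ∑ E ≤ ∑ (Q (i + 1) - (1 + α) Q i)⁺`, and only witnesses contribute to the right-hand side,
each by at most `Q (i + 1)`.
-/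

open Finset

/-- The exponential property `P_α`: `Q (k+1) ≤ (1+α) * Q k` for all `k < ℓ`. -/
def ExpProp {ℓ : ℕ} (α : ℝ) (Q : Fin ℓ → ℝ) : Prop :=
  ∀ i : Fin ℓ, ∀ h : i.1 + 1 < ℓ, Q ⟨i.1 + 1, h⟩ ≤ (1 + α) * Q i

/-- Predecessor of a nonzero index in `Fin ℓ`. -/
def pred' {ℓ : ℕ} (i : Fin ℓ) : Fin ℓ :=
  ⟨i.1 - 1, Nat.lt_of_le_of_lt (Nat.sub_le _ _) i.2⟩

section Normalization

variable {n : ℕ} {Q B : Fin n → ℝ}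

theorem isDist_div_sum (hB : ∀ i, 0 ≤ B i) (hpos : 0 < ∑ i, B i) :
    IsDist (fun i => B i / ∑ j, B j) :=
  ⟨fun i => div_nonneg (hB i) hpos.le, by rw [← sum_div, div_self hpos.ne']⟩

theorem tv_div_sum_le (hQ : IsDist Q) (hQB : ∀ i, Q i ≤ B i) :
    tv Q (fun i => B i / ∑ j, B j) ≤ ∑ i, B i - 1 := by
  have hS : 1 ≤ ∑ j, B j := hQ.2 ▸ sum_le_sum fun i _ => hQB i
  have hB : ∀ i, 0 ≤ B i := fun i => (hQ.1 i).trans (hQB i)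
  -- both `Q i` and `B i / ∑ B` lie below `B i`
  have hpt : ∀ i, |Q i - B i / ∑ j, B j| ≤ (B i - Q i) + (B i - B i / ∑ j, B j) := by
    intro i
    have := div_le_self (hB i) hS
    rw [abs_le]
    constructor <;> linarith [hQB i]
  have hsum : ∑ i, ((B i - Q i) + (B i - B i / ∑ j, B j)) = 2 * (∑ i, B i - 1) := by
    rw [sum_add_distrib, sum_sub_distrib, sum_sub_distrib, hQ.2, ← sum_div,
      div_self (by linarith)]
    ring
  unfold tv
  linarith [sum_le_sum fun i (_ : i ∈ univ) => hpt i]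

end Normalization

theorem ExpProp.div_const {ℓ : ℕ} {α c : ℝ} {B : Fin ℓ → ℝ} (hB : ExpProp α B) (hc : 0 ≤ c) :
    ExpProp α (fun i => B i / c) := fun i h => by
  rw [mul_div_assoc']
  exact div_le_div_of_nonneg_right (hB i h) hc

section Envelope

variable {n : ℕ} (α : ℝ) (Q : Fin n → ℝ)

noncomputable def expEnvelope (i : Fin n) : ℝ :=
  if h : i.1 + 1 < n then max (Q i) (expEnvelope ⟨i.1 + 1, h⟩ / (1 + α)) else Q i
termination_by n - i.1

variable {α Q}

theorem expEnvelope_of_lt {i : Fin n} (h : i.1 + 1 < n) :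
    expEnvelope α Q i = max (Q i) (expEnvelope α Q ⟨i.1 + 1, h⟩ / (1 + α)) := by
  rw [expEnvelope, dif_pos h]

theorem expEnvelope_of_not_lt {i : Fin n} (h : ¬i.1 + 1 < n) : expEnvelope α Q i = Q i := by
  rw [expEnvelope, dif_neg h]

theorem le_expEnvelope (i : Fin n) : Q i ≤ expEnvelope α Q i := by
  by_cases h : i.1 + 1 < n
  · exact (expEnvelope_of_lt h).symm ▸ le_max_left _ _
  · exact (expEnvelope_of_not_lt h).ge

theorem expProp_expEnvelope (hα : 0 < 1 + α) : ExpProp α (expEnvelope α Q) := fun i h => by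
  have := le_max_right (Q i) (expEnvelope α Q ⟨i.1 + 1, h⟩ / (1 + α))
  rwa [← expEnvelope_of_lt h, div_le_iff₀' hα] at this

theorem mul_expEnvelope_sub_le {m : ℕ} {Q : Fin (m + 1) → ℝ} (hα : 0 < 1 + α) (i : Fin m) :
    (1 + α) * (expEnvelope α Q i.castSucc - Q i.castSucc) ≤
      (expEnvelope α Q i.succ - Q i.succ) + max (Q i.succ - (1 + α) * Q i.castSucc) 0 := by
  have hlt : i.castSucc.1 + 1 < m + 1 := by simp
  have hsucc : (⟨i.castSucc.1 + 1, hlt⟩ : Fin (m + 1)) = i.succ := rfl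
  have hle := le_expEnvelope (α := α) (Q := Q) i.succ
  rw [expEnvelope_of_lt hlt, hsucc, mul_sub, mul_max_of_nonneg _ _ hα.le, mul_div_cancel₀ _ hα.ne']
  rcases le_total ((1 + α) * Q i.castSucc) (expEnvelope α Q i.succ) with h | h
  · rw [max_eq_right h]
    linarith [le_max_left (Q i.succ - (1 + α) * Q i.castSucc) 0]
  · rw [max_eq_left h]
    linarith [le_max_right (Q i.succ - (1 + α) * Q i.castSucc) 0]

theorem mul_sum_expEnvelope_sub_le {m : ℕ} {Q : Fin (m + 1) → ℝ} (hα : 0 < 1 + α) :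
    α * ∑ i, (expEnvelope α Q i - Q i) ≤
      ∑ i : Fin m, max (Q i.succ - (1 + α) * Q i.castSucc) 0 := by
  set E := fun i => expEnvelope α Q i - Q i
  have hE0 : 0 ≤ E 0 := sub_nonneg.2 (le_expEnvelope 0)
  have hElast : E (Fin.last m) = 0 := by simp [E, expEnvelope_of_not_lt]
  have hsplit_last := Fin.sum_univ_castSucc E
  have hsplit_first := Fin.sum_univ_succ E
  have hstep : (1 + α) * ∑ i : Fin m, E i.castSucc ≤
      ∑ i : Fin m, E i.succ + ∑ i : Fin m, max (Q i.succ - (1 + α) * Q i.castSucc) 0 := by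
    rw [mul_sum, ← sum_add_distrib]
    exact sum_le_sum fun i _ => mul_expEnvelope_sub_le hα i
  rw [hElast, add_zero] at hsplit_last
  rw [← hsplit_last] at hstep
  change α * ∑ i, E i ≤ _
  linarith

end Envelope

theorem sum_max_sub_le_sum_witnesses {m : ℕ} {α : ℝ} {Q : Fin (m + 1) → ℝ}
    (hα : 0 ≤ 1 + α) (hQ : ∀ i, 0 ≤ Q i) :
    ∑ i : Fin m, max (Q i.succ - (1 + α) * Q i.castSucc) 0 ≤
      ∑ i ∈ univ.filter (fun i : Fin (m + 1) => 0 < i.1 ∧ Q i > (1 + α) * Q (pred' i)), Q i := by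
  rw [sum_filter, Fin.sum_univ_succ]
  simp only [Fin.val_zero, lt_self_iff_false, false_and, if_false, zero_add, Fin.val_succ,
    Nat.succ_pos, true_and]
  refine sum_le_sum fun i _ => ?_
  have hpred : pred' i.succ = i.castSucc := Fin.ext (by simp [pred'])
  rw [hpred]
  split_ifs with h
  · exact max_le (by linarith [mul_nonneg hα (hQ i.castSucc)]) (hQ _)
  · exact max_le (by linarith) le_rfl

theorem dist_expProp_le_weight_witnesses_general {ℓ : ℕ} (α : ℝ) (hα : 0 < α)
    (Q : Fin ℓ → ℝ) (hQ : IsDist Q)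
    (W : Finset (Fin ℓ))
    (hW : W = univ.filter (fun i : Fin ℓ => 0 < i.1 ∧ Q i > (1 + α) * Q (pred' i))) :
    ∃ Q' : Fin ℓ → ℝ, IsDist Q' ∧ ExpProp α Q' ∧
      tv Q Q' ≤ ((1 + α) / α) * ∑ i ∈ W, Q i := by
  obtain ⟨m, rfl⟩ : ∃ m, ℓ = m + 1 :=
    Nat.exists_eq_succ_of_ne_zero fun h => by subst h; simpa using hQ.2
  subst hW
  set B := expEnvelope α Q
  have hQB : ∀ i, Q i ≤ B i := le_expEnvelope
  have hS : 1 ≤ ∑ i, B i := hQ.2 ▸ sum_le_sum fun i _ => hQB i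
  have hα1 : 0 < 1 + α := by linarith
  refine ⟨fun i => B i / ∑ j, B j,
    isDist_div_sum (fun i => (hQ.1 i).trans (hQB i)) (by linarith),
    (expProp_expEnvelope hα1).div_const (by linarith), ?_⟩
  calc tv Q (fun i => B i / ∑ j, B j) ≤ ∑ i, B i - 1 := tv_div_sum_le hQ hQB
    _ = (α * ∑ i, (B i - Q i)) / α := by rw [sum_sub_distrib, hQ.2]; field_simp
    _ ≤ (∑ i ∈ _, Q i) / α := by
      gcongr
      exact (mul_sum_expEnvelope_sub_le hα1).trans (sum_max_sub_le_sum_witnesses hα1.le hQ.1)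
    _ ≤ ((1 + α) / α) * ∑ i ∈ _, Q i := by
      rw [div_mul_eq_mul_div]
      gcongr
      exact le_mul_of_one_le_left (sum_nonneg fun i _ => hQ.1 i) (by linarith)

theorem dist_expProp_le_weight_witnesses {ℓ : ℕ} (α : ℝ) (hα : 0 < α) (hα1 : α < 1)
    (Q : Fin ℓ → ℝ) (hQ : IsDist Q)
    (W : Finset (Fin ℓ))
    (hW : W = univ.filter (fun i : Fin ℓ => 0 < i.1 ∧ Q i > (1 + α) * Q (pred' i))) :
    ∃ Q' : Fin ℓ → ℝ, IsDist Q' ∧ ExpProp α Q' ∧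
      tv Q Q' ≤ ((1 + α) / α) * ∑ i ∈ W, Q i :=
  dist_expProp_le_weight_witnesses_general α hα Q hQ W hW
end

section
/- Let D₁ be the uniform distribution on {1,...,(2+κε)m} for parameters ε ∈ (0,1/2), κ = 4/(1−2ε), and positive integer m (assume (2+κε)m, (1+κε)m, and (1+κε/2)m are integers). Let D₂ be the distribution putting total weight 1/2−ε uniformly on {1,...,m}, weight 0 on {m+1,...,(1+κε/2)m}, weight 2ε uniformly on {(1+κε/2)m+1,...,(1+κε)m}, and weight 1/2−ε uniformly on {(1+κε)m+1,...,(2+κε)m}. Then D₁ is monotone non-increasing, and the total variation distance from D₂ to every monotone non-increasing distribution is at least ε. -/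
/-!
`D₂` vanishes on the gap `[m, p)` and puts mass `2ε` on the block `[p, q)` of the same length
right after it. Shifting the block onto the gap shows that a non-increasing `P` has at least as
much mass on the gap as on the block, so
`∑ |D₂ - P| ≥ ∑_block (D₂ - P) + ∑_gap P ≥ 2ε - ∑_block P + ∑_block P = 2ε`.
-/

open Finset

def finIco (n a b : ℕ) : Finset (Fin n) := {i | a ≤ i.1 ∧ i.1 < b}

@[simp]
lemma mem_finIco {n a b : ℕ} {i : Fin n} : i ∈ finIco n a b ↔ a ≤ i.1 ∧ i.1 < b := by
  simp [finIco]

lemma card_finIco {n a b : ℕ} (hb : b ≤ n) : #(finIco n a b) = b - a := by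
  rw [← card_map Fin.valEmbedding, ← Nat.card_Ico]
  congr 1
  ext k
  simp only [mem_map, mem_finIco, Fin.valEmbedding_apply, mem_Ico]
  exact ⟨fun ⟨i, hi, hik⟩ => hik ▸ hi, fun hk => ⟨⟨k, by omega⟩, hk, rfl⟩⟩

lemma disjoint_finIco {n a b c : ℕ} : Disjoint (finIco n a b) (finIco n b c) := by
  rw [disjoint_left]
  intro i
  simp only [mem_finIco]
  omega

lemma bijOn_finIco_sub {n a b d : ℕ} (hb : b + d ≤ n) :
    Set.BijOn (fun i : Fin n => (⟨i.1 - d, by omega⟩ : Fin n))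
      (finIco n (a + d) (b + d)) (finIco n a b) := by
  refine ⟨fun i hi => ?_, fun i hi j hj hij => ?_, fun i hi => ?_⟩
  · simp only [mem_coe, mem_finIco] at hi ⊢
    omega
  · simp only [mem_coe, mem_finIco, Fin.mk.injEq] at hi hj hij
    exact Fin.ext (by omega)
  · simp only [mem_coe, mem_finIco] at hi
    exact ⟨⟨i.1 + d, by omega⟩, by simp only [mem_coe, mem_finIco]; omega, Fin.ext (by simp)⟩

lemma antitone_ite_val_lt {n r : ℕ} {c : ℝ} (hc : 0 ≤ c) :
    Antitone fun i : Fin n => if i.1 < r then c else 0 := by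
  intro i j hij
  dsimp only
  split_ifs <;> first | rfl | exact hc | omega

lemma sum_le_sum_of_antitone_of_bijOn {ι M : Type*} [Preorder ι] [AddCommMonoid M]
    [PartialOrder M] [IsOrderedAddMonoid M] {f : ι → M} (hf : Antitone f) {s t : Finset ι}
    {e : ι → ι} (he : Set.BijOn e s t) (hle : ∀ i ∈ s, e i ≤ i) :
    ∑ i ∈ s, f i ≤ ∑ i ∈ t, f i :=
  calc ∑ i ∈ s, f i ≤ ∑ i ∈ s, f (e i) := sum_le_sum fun i hi => hf (hle i hi)
    _ = ∑ i ∈ t, f i := sum_nbij e he.mapsTo he.injOn he.surjOn fun _ _ => rfl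

lemma sum_le_sum_abs_sub_of_antitone {ι : Type*} [Fintype ι] [Preorder ι] {D P : ι → ℝ}
    (hP₀ : ∀ i, 0 ≤ P i) (hP : Antitone P) {s t : Finset ι} (hst : Disjoint s t) {e : ι → ι}
    (he : Set.BijOn e t s) (hle : ∀ i ∈ t, e i ≤ i) (hD : ∀ i ∈ s, D i = 0) :
    ∑ i ∈ t, D i ≤ ∑ i, |D i - P i| := by
  have hs : ∑ i ∈ s, |D i - P i| = ∑ i ∈ s, P i :=
    sum_congr rfl fun i hi => by rw [hD i hi, zero_sub, abs_neg, abs_of_nonneg (hP₀ i)]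
  have ht : ∑ i ∈ t, (D i - P i) ≤ ∑ i ∈ t, |D i - P i| := sum_le_sum fun i _ => le_abs_self _
  calc ∑ i ∈ t, D i = ∑ i ∈ t, (D i - P i) + ∑ i ∈ t, P i := by rw [← sum_add_distrib]; simp
    _ ≤ ∑ i ∈ t, |D i - P i| + ∑ i ∈ s, P i :=
        add_le_add ht (sum_le_sum_of_antitone_of_bijOn hP he hle)
    _ = ∑ i ∈ s.disjUnion t hst, |D i - P i| := by rw [sum_disjUnion, hs, add_comm]
    _ ≤ ∑ i, |D i - P i| := sum_le_sum_of_subset_of_nonneg (subset_univ _) fun _ _ _ => abs_nonneg _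

theorem eval_lb_construction {n m p q r : ℕ} (ε κ : ℝ)
    (hε0 : 0 < ε) (hε : ε < 1 / 2) (hκ : κ = 4 / (1 - 2 * ε))
    (hm : 0 < m)
    (hp : (p : ℝ) = (1 + κ * ε / 2) * m)
    (hq : (q : ℝ) = (1 + κ * ε) * m)
    (hr : (r : ℝ) = (2 + κ * ε) * m)
    (hn : r ≤ n)
    (D₁ D₂ : Fin n → ℝ)
    (hD₁ : ∀ i : Fin n, D₁ i = if i.1 < r then 1 / (r : ℝ) else 0)
    (hD₂ : ∀ i : Fin n, D₂ i =
      if i.1 < m then (1 / 2 - ε) / m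
      else if i.1 < p then 0
      else if i.1 < q then 2 * ε / ((q : ℝ) - p)
      else if i.1 < r then (1 / 2 - ε) / ((r : ℝ) - q)
      else 0) :
    Antitone D₁ ∧ ∀ P : Fin n → ℝ, IsDist P → Antitone P → ε ≤ tv D₂ P := by
  refine ⟨funext hD₁ ▸ antitone_ite_val_lt (by positivity), fun P hP hP_anti => ?_⟩
  have hκε : 0 < κ * ε := by rw [hκ]; exact mul_pos (div_pos four_pos (by linarith)) hε0
  have hmR : (0 : ℝ) < m := by exact_mod_cast hm
  have hmp : m < p := by exact_mod_cast (show (m : ℝ) < p by rw [hp]; nlinarith)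
  have hpq : p + p = q + m := by exact_mod_cast (show (p : ℝ) + p = q + m by rw [hp, hq]; ring)
  have hqr : q ≤ r := by exact_mod_cast (show (q : ℝ) ≤ r by rw [hq, hr]; nlinarith)
  obtain ⟨d, rfl⟩ : ∃ d, p = m + d := ⟨p - m, by omega⟩
  obtain rfl : q = m + d + d := by omega
  have hd : (0 : ℝ) < d := by exact_mod_cast (show 0 < d by omega)
  have hD₂_zero : ∀ i ∈ finIco n m (m + d), D₂ i = 0 := fun i hi => by
    rw [mem_finIco] at hi
    rw [hD₂, if_neg (by omega), if_pos hi.2]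
  have hD₂_bump : ∀ i ∈ finIco n (m + d) (m + d + d), D₂ i = 2 * ε / d := fun i hi => by
    rw [mem_finIco] at hi
    rw [hD₂, if_neg (by omega), if_neg (by omega), if_pos hi.2]
    push_cast
    rw [add_sub_cancel_left]
  have hmass : ∑ i ∈ finIco n (m + d) (m + d + d), D₂ i = 2 * ε := by
    rw [sum_congr rfl hD₂_bump, sum_const, card_finIco (by omega), Nat.add_sub_cancel_left,
      nsmul_eq_mul, mul_div_cancel₀ _ hd.ne']
  have hlower := sum_le_sum_abs_sub_of_antitone hP.1 hP_anti disjoint_finIco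
    (bijOn_finIco_sub (a := m) (b := m + d) (d := d) (by omega))
    (fun i _ => Fin.mk_le_mk.mpr (Nat.sub_le _ _)) hD₂_zero
  rw [tv]
  linarith
end
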